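/- There exist constants C > 0 and ε₀ > 0 such that for every 0 < ε < ε₀ and every pair of ε-potentials (f, g) normalized so that ∫ f dμ₀ = ∫ g dμ₁ and with the Kantorovich potentials normalized so that ∫ f₀ dμ₀ = ∫ g₀ dμ₁: | ∫_{Ω₀} (f − f₀) dμ₀ | ≤ C · ε^{2/3}. -/

import Mathlib

/-!
Let `D = ∫ (f₀ - f) dμ₀ + ∫ (g₀ - g) dμ₁`; under the two normalizations `D = 2 ∫ (f₀ - f) dμ₀`.
The regularized plan has density `(xy - f - g)₊ / ε` with respect to `μ₀ ⊗ μ₁`, and since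
`xy ≤ f₀ x + g₀ y`, testing it against `f₀ + g₀ - f - g` gives `∫ (xy - f - g)₊² ≤ ε D`.
Conversely, test `f₀ + g₀ - f - g` against the coupling that matches the `K` quantile blocks of
`μ₀` and `μ₁`. On its support the distribution functions satisfy `|F₀ x - F₁ y| ≤ 1 / K`, and
the density bounds make the Monge map `Λ/λ`-Lipschitz, so `f₀ x + g₀ y - xy ≤ Λ / (λ³ K²)` there.
Young's inequality against the regularized plan then gives `D ≤ D / 2 + ε K / 2 + Λ / (λ³ K²)`,
and `K ≈ ε^(-1/3)` balances the two error terms.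
-/

open MeasureTheory Set
open scoped Classical ENNReal

noncomputable section

/-- `μ` is a probability measure supported on `[a,b]` with continuous density `u`
bounded below by `lam` and above by `Lam` on `[a,b]`. -/
def IsGoodMarginal (μ : Measure ℝ) (u : ℝ → ℝ) (a b lam Lam : ℝ) : Prop :=
  IsProbabilityMeasure μ ∧
  μ = (volume.restrict (Icc a b)).withDensity (fun x => ENNReal.ofReal (u x)) ∧
  ContinuousOn u (Icc a b) ∧
  ∀ x ∈ Icc a b, lam ≤ u x ∧ u x ≤ Lam

/-- `(f,g)` is a pair of `ε`-potentials for the quadratically regularized OT problem. -/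
def IsPotentialPair (μ₀ μ₁ : Measure ℝ) (a₀ b₀ a₁ b₁ ε : ℝ) (f g : ℝ → ℝ) : Prop :=
  (∃ K, LipschitzOnWith K f (Icc a₀ b₀)) ∧
  (∃ K, LipschitzOnWith K g (Icc a₁ b₁)) ∧
  (∀ x ∈ Icc a₀ b₀, ∫ y in Icc a₁ b₁, max (x * y - f x - g y) 0 ∂μ₁ = ε) ∧
  (∀ y ∈ Icc a₁ b₁, ∫ x in Icc a₀ b₀, max (x * y - f x - g y) 0 ∂μ₀ = ε)

/-- the `x`-section `S_x` of the support of the optimal coupling. -/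
def secX (f g : ℝ → ℝ) (a₁ b₁ x : ℝ) : Set ℝ :=
  {y ∈ Icc a₁ b₁ | 0 ≤ x * y - f x - g y}

/-- the `y`-section `S^y` of the support of the optimal coupling. -/
def secY (f g : ℝ → ℝ) (a₀ b₀ y : ℝ) : Set ℝ :=
  {x ∈ Icc a₀ b₀ | 0 ≤ x * y - f x - g y}

/-- `T_ε(x) = (∫_{S_x} y dμ₁)/μ₁(S_x)`, the derivative `f'` of the potential `f`. -/
def Tmap (μ₁ : Measure ℝ) (f g : ℝ → ℝ) (a₁ b₁ x : ℝ) : ℝ :=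
  (∫ y in secX f g a₁ b₁ x, y ∂μ₁) / (μ₁ (secX f g a₁ b₁ x)).toReal

/-- the symmetric quantity, the derivative `g'` of the potential `g`. -/
def Gmap (μ₀ : Measure ℝ) (f g : ℝ → ℝ) (a₀ b₀ y : ℝ) : ℝ :=
  (∫ x in secY f g a₀ b₀ y, x ∂μ₀) / (μ₀ (secY f g a₀ b₀ y)).toReal

/-- left endpoint `y_m(x)` of `S_x`. -/
def ymF (f g : ℝ → ℝ) (a₁ b₁ x : ℝ) : ℝ := sInf (secX f g a₁ b₁ x)

/-- right endpoint `y_M(x)` of `S_x`. -/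
def yMF (f g : ℝ → ℝ) (a₁ b₁ x : ℝ) : ℝ := sSup (secX f g a₁ b₁ x)

/-- left endpoint `x_m(y)` of `S^y`. -/
def xmF (f g : ℝ → ℝ) (a₀ b₀ y : ℝ) : ℝ := sInf (secY f g a₀ b₀ y)

/-- right endpoint `x_M(y)` of `S^y`. -/
def xMF (f g : ℝ → ℝ) (a₀ b₀ y : ℝ) : ℝ := sSup (secY f g a₀ b₀ y)

/-- `T₀` is the (nondecreasing) Monge map from `μ₀` to `μ₁`. -/
def IsMongeMap (μ₀ μ₁ : Measure ℝ) (T₀ : ℝ → ℝ) : Prop :=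
  Monotone T₀ ∧ Measure.map T₀ μ₀ = μ₁

/-- convex conjugate relative to `[a,b]`. -/
def conjOn (f : ℝ → ℝ) (a b y : ℝ) : ℝ := sSup ((fun x => x * y - f x) '' Icc a b)

namespace IsGoodMarginal

open ProbabilityTheory

variable {μ : Measure ℝ} {u : ℝ → ℝ} {a b lam Lam : ℝ}

lemma nullSingletonClass (h : IsGoodMarginal μ u a b lam Lam) : NullSingletonClass μ := by
  rw [h.2.1]; infer_instance

lemma ae_mem_Ioo (h : IsGoodMarginal μ u a b lam Lam) : ∀ᵐ x ∂μ, x ∈ Ioo a b := by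
  rw [h.2.1, ← restrict_Ioo_eq_restrict_Icc]
  exact (withDensity_absolutelyContinuous _ _).ae_le (ae_restrict_mem measurableSet_Ioo)

lemma ae_mem_Icc (h : IsGoodMarginal μ u a b lam Lam) : ∀ᵐ x ∂μ, x ∈ Icc a b :=
  h.ae_mem_Ioo.mono fun _ hx => Ioo_subset_Icc_self hx

lemma restrict_Icc (h : IsGoodMarginal μ u a b lam Lam) : μ.restrict (Icc a b) = μ :=
  Measure.restrict_eq_self_of_ae_mem h.ae_mem_Icc

lemma measure_Ioc_le (h : IsGoodMarginal μ u a b lam Lam) (hLam : 0 ≤ Lam) (c d : ℝ) :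
    μ (Ioc c d) ≤ ENNReal.ofReal (Lam * (d - c)) := by
  rw [h.2.1, withDensity_apply _ measurableSet_Ioc, Measure.restrict_restrict measurableSet_Ioc]
  calc ∫⁻ x in Ioc c d ∩ Icc a b, ENNReal.ofReal (u x)
      ≤ ∫⁻ _ in Ioc c d ∩ Icc a b, ENNReal.ofReal Lam :=
        setLIntegral_mono_ae' (measurableSet_Ioc.inter measurableSet_Icc)
          (ae_of_all _ fun x hx => ENNReal.ofReal_le_ofReal (h.2.2.2 x hx.2).2)
    _ ≤ ENNReal.ofReal Lam * volume (Ioc c d) := by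
        rw [setLIntegral_const]; gcongr; exact inter_subset_left
    _ = ENNReal.ofReal (Lam * (d - c)) := by rw [Real.volume_Ioc, ENNReal.ofReal_mul hLam]

lemma ofReal_le_measure_Ioc (h : IsGoodMarginal μ u a b lam Lam) {c d : ℝ} (hac : a ≤ c)
    (hcd : c ≤ d) (hdb : d ≤ b) : ENNReal.ofReal (lam * (d - c)) ≤ μ (Ioc c d) := by
  have hsub : Ioc c d ∩ Icc a b = Ioc c d :=
    inter_eq_self_of_subset_left fun x hx => ⟨hac.trans hx.1.le, hx.2.trans hdb⟩
  rw [h.2.1, withDensity_apply _ measurableSet_Ioc, Measure.restrict_restrict measurableSet_Ioc,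
    hsub]
  calc ENNReal.ofReal (lam * (d - c)) = ∫⁻ _ in Ioc c d, ENNReal.ofReal lam := by
        rw [setLIntegral_const, Real.volume_Ioc, ENNReal.ofReal_mul' (sub_nonneg.2 hcd)]
    _ ≤ ∫⁻ x in Ioc c d, ENNReal.ofReal (u x) :=
        setLIntegral_mono_ae' measurableSet_Ioc (ae_of_all _ fun x hx =>
          ENNReal.ofReal_le_ofReal (h.2.2.2 x ⟨hac.trans hx.1.le, hx.2.trans hdb⟩).1)

lemma ofReal_cdf_sub (h : IsGoodMarginal μ u a b lam Lam) (c d : ℝ) :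
    ENNReal.ofReal (cdf μ d - cdf μ c) = μ (Ioc c d) := by
  have := h.1
  rw [← (cdf μ).measure_Ioc, measure_cdf]

lemma abs_cdf_sub_le (h : IsGoodMarginal μ u a b lam Lam) (hLam : 0 ≤ Lam) (c d : ℝ) :
    |cdf μ d - cdf μ c| ≤ Lam * |d - c| := by
  wlog hcd : c ≤ d generalizing c d
  · rw [abs_sub_comm, abs_sub_comm d]
    exact this d c (le_of_not_ge hcd)
  rw [abs_of_nonneg (sub_nonneg.2 ((cdf μ).mono hcd)), abs_of_nonneg (sub_nonneg.2 hcd)]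
  refine (ENNReal.ofReal_le_ofReal_iff (by positivity)).1 ?_
  exact (h.ofReal_cdf_sub c d).trans_le (h.measure_Ioc_le hLam c d)

lemma mul_abs_sub_le_abs_cdf_sub (h : IsGoodMarginal μ u a b lam Lam) {c d : ℝ}
    (hc : c ∈ Icc a b) (hd : d ∈ Icc a b) : lam * |d - c| ≤ |cdf μ d - cdf μ c| := by
  wlog hcd : c ≤ d generalizing c d
  · rw [abs_sub_comm, abs_sub_comm (cdf μ d)]
    exact this hd hc (le_of_not_ge hcd)
  rw [abs_of_nonneg (sub_nonneg.2 ((cdf μ).mono hcd)), abs_of_nonneg (sub_nonneg.2 hcd)]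
  refine (ENNReal.ofReal_le_ofReal_iff (sub_nonneg.2 ((cdf μ).mono hcd))).1 ?_
  exact (h.ofReal_le_measure_Ioc hc.1 hcd hd.2).trans_eq (h.ofReal_cdf_sub c d).symm

lemma continuous_cdf (h : IsGoodMarginal μ u a b lam Lam) (hLam : 0 ≤ Lam) :
    Continuous (cdf μ) :=
  (LipschitzWith.of_dist_le_mul (K := Lam.toNNReal) fun c d => by
    simpa [Real.dist_eq, Real.coe_toNNReal _ hLam] using h.abs_cdf_sub_le hLam d c).continuous

lemma strictMonoOn_cdf (h : IsGoodMarginal μ u a b lam Lam) (hlam : 0 < lam) :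
    StrictMonoOn (cdf μ) (Icc a b) := fun c hc d hd hcd => by
  have := h.mul_abs_sub_le_abs_cdf_sub hc hd
  rw [abs_of_pos (sub_pos.2 hcd), abs_of_nonneg (sub_nonneg.2 ((cdf μ).mono hcd.le))] at this
  nlinarith [mul_pos hlam (sub_pos.2 hcd)]

lemma cdf_left (h : IsGoodMarginal μ u a b lam Lam) : cdf μ a = 0 := by
  have := h.1
  rw [cdf_eq_real, measureReal_eq_zero_iff]
  exact measure_mono_null (fun x (hx : x ≤ a) (hx' : x ∈ Ioo a b) => hx.not_gt hx'.1)
    (ae_iff.1 h.ae_mem_Ioo)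

lemma cdf_right (h : IsGoodMarginal μ u a b lam Lam) : cdf μ b = 1 := by
  have := h.1
  rw [cdf_eq_real, measureReal_def, (prob_compl_eq_zero_iff measurableSet_Iic).1,
    ENNReal.toReal_one]
  exact measure_mono_null (fun x (hx : ¬ x ≤ b) (hx' : x ∈ Ioo a b) => hx hx'.2.le)
    (ae_iff.1 h.ae_mem_Ioo)

lemma cdf_mem_Ioo_iff (h : IsGoodMarginal μ u a b lam Lam) (hlam : 0 < lam) {x : ℝ} :
    cdf μ x ∈ Ioo 0 1 ↔ x ∈ Ioo a b := by
  constructor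
  · rintro ⟨h0, h1⟩
    refine ⟨lt_of_not_ge fun hx => ?_, lt_of_not_ge fun hx => ?_⟩
    · linarith [h.cdf_left ▸ (cdf μ).mono hx]
    · linarith [h.cdf_right ▸ (cdf μ).mono hx]
  · rintro ⟨hax, hxb⟩
    have hab : a ≤ b := (hax.trans hxb).le
    rw [← h.cdf_left, ← h.cdf_right]
    exact ⟨h.strictMonoOn_cdf hlam (left_mem_Icc.2 hab) ⟨hax.le, hxb.le⟩ hax,
      h.strictMonoOn_cdf hlam ⟨hax.le, hxb.le⟩ (right_mem_Icc.2 hab) hxb⟩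

lemma exists_cdf_eq (h : IsGoodMarginal μ u a b lam Lam) (hab : a ≤ b) (hLam : 0 ≤ Lam) {t : ℝ}
    (ht : t ∈ Icc 0 1) : ∃ q ∈ Icc a b, cdf μ q = t := by
  have := intermediate_value_Icc hab (h.continuous_cdf hLam).continuousOn
  rw [h.cdf_left, h.cdf_right] at this
  exact this ht

lemma measure_cdf_preimage_Ioc (h : IsGoodMarginal μ u a b lam Lam) (hab : a ≤ b)
    (hlam : 0 < lam) (hLam : 0 ≤ Lam) {s t : ℝ} (hs : s ∈ Icc 0 1) (ht : t ∈ Icc 0 1) :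
    μ (cdf μ ⁻¹' Ioc s t) = ENNReal.ofReal (t - s) := by
  obtain ⟨p, hp, rfl⟩ := h.exists_cdf_eq hab hLam hs
  obtain ⟨q, hq, rfl⟩ := h.exists_cdf_eq hab hLam ht
  have hmono := h.strictMonoOn_cdf hlam
  have hIcc : μ (Icc a b)ᶜ = 0 := mem_ae_iff.1 h.ae_mem_Icc
  have hsets : cdf μ ⁻¹' Ioc (cdf μ p) (cdf μ q) ∩ Icc a b = Ioc p q ∩ Icc a b := by
    ext x
    simp only [mem_inter_iff, mem_preimage, mem_Ioc]
    exact and_congr_left fun hx => and_congr (hmono.lt_iff_lt hp hx) (hmono.le_iff_le hx hq)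
  rw [← measure_inter_conull hIcc, hsets, measure_inter_conull hIcc, h.ofReal_cdf_sub]

lemma measure_ceil_cdf_eq (h : IsGoodMarginal μ u a b lam Lam) (hab : a ≤ b) (hlam : 0 < lam)
    (hLam : 0 ≤ Lam) {K : ℕ} (hK : 0 < K) {j : ℤ} (hj : j ∈ Icc 1 (K : ℤ)) :
    μ {y | ⌈K * cdf μ y⌉ = j} = ENNReal.ofReal (1 / K) := by
  have hKR : (0 : ℝ) < K := by exact_mod_cast hK
  have hj1 : (1 : ℝ) ≤ j := by exact_mod_cast hj.1
  have hjK : (j : ℝ) ≤ K := by exact_mod_cast hj.2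
  have hsets : {y | ⌈K * cdf μ y⌉ = j} = cdf μ ⁻¹' Ioc ((j - 1) / K) (j / K) := by
    ext y
    simp only [mem_ofPred_eq, mem_preimage, mem_Ioc, Int.ceil_eq_iff, div_lt_iff₀ hKR,
      le_div_iff₀ hKR, mul_comm (cdf μ y)]
  rw [hsets, h.measure_cdf_preimage_Ioc hab hlam hLam
    ⟨by positivity, by rw [div_le_one hKR]; linarith⟩
    ⟨by positivity, by rw [div_le_one hKR]; linarith⟩]
  congr 1
  ring

end IsGoodMarginal

namespace IsMongeMap

open ProbabilityTheory

variable {μ₀ μ₁ : Measure ℝ} {T : ℝ → ℝ}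

lemma cdf_comp [IsProbabilityMeasure μ₀] [IsProbabilityMeasure μ₁] [NullSingletonClass μ₁]
    (hT : IsMongeMap μ₀ μ₁ T) (x : ℝ) : cdf μ₁ (T x) = cdf μ₀ x := by
  have hpre : ∀ s, MeasurableSet s → μ₁ s = μ₀ (T ⁻¹' s) := fun s hs => by
    rw [← hT.2, Measure.map_apply hT.1.measurable hs]
  rw [cdf_eq_real, cdf_eq_real, measureReal_def, measureReal_def, hpre _ measurableSet_Iic]
  congr 1
  refine le_antisymm ?_ (measure_mono fun z hz => hT.1 hz)
  calc μ₀ (T ⁻¹' Iic (T x)) ≤ μ₀ (Iic x ∪ T ⁻¹' {T x}) :=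
        measure_mono fun z hz => (le_or_gt z x).imp id fun hxz => le_antisymm hz (hT.1 hxz.le)
    _ ≤ μ₀ (Iic x) + μ₀ (T ⁻¹' {T x}) := measure_union_le _ _
    _ = μ₀ (Iic x) := by rw [← hpre _ (measurableSet_singleton _), measure_singleton, add_zero]

variable {u₀ u₁ : ℝ → ℝ} {a₀ b₀ a₁ b₁ lam Lam : ℝ}

lemma cdf_comp_of_isGoodMarginal (h₀ : IsGoodMarginal μ₀ u₀ a₀ b₀ lam Lam)
    (h₁ : IsGoodMarginal μ₁ u₁ a₁ b₁ lam Lam) (hT : IsMongeMap μ₀ μ₁ T) (x : ℝ) :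
    cdf μ₁ (T x) = cdf μ₀ x :=
  have := h₀.1
  have := h₁.1
  have := h₁.nullSingletonClass
  hT.cdf_comp x

lemma mapsTo_Ioo (h₀ : IsGoodMarginal μ₀ u₀ a₀ b₀ lam Lam)
    (h₁ : IsGoodMarginal μ₁ u₁ a₁ b₁ lam Lam) (hT : IsMongeMap μ₀ μ₁ T) (hlam : 0 < lam) :
    MapsTo T (Ioo a₀ b₀) (Ioo a₁ b₁) := fun x hx => by
  rwa [← h₁.cdf_mem_Ioo_iff hlam, hT.cdf_comp_of_isGoodMarginal h₀ h₁, h₀.cdf_mem_Ioo_iff hlam]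

lemma surjOn_Ioo (h₀ : IsGoodMarginal μ₀ u₀ a₀ b₀ lam Lam)
    (h₁ : IsGoodMarginal μ₁ u₁ a₁ b₁ lam Lam) (hT : IsMongeMap μ₀ μ₁ T) (hab₀ : a₀ ≤ b₀)
    (hlam : 0 < lam) (hLam : 0 ≤ Lam) : SurjOn T (Ioo a₀ b₀) (Ioo a₁ b₁) := by
  intro y hy
  have hFy := (h₁.cdf_mem_Ioo_iff hlam).2 hy
  obtain ⟨x, -, hxy⟩ := h₀.exists_cdf_eq hab₀ hLam (Ioo_subset_Icc_self hFy)
  have hx : x ∈ Ioo a₀ b₀ := (h₀.cdf_mem_Ioo_iff hlam).1 (hxy ▸ hFy)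
  refine ⟨x, hx, (h₁.strictMonoOn_cdf hlam).injOn
    (Ioo_subset_Icc_self (hT.mapsTo_Ioo h₀ h₁ hlam hx)) (Ioo_subset_Icc_self hy) ?_⟩
  rw [hT.cdf_comp_of_isGoodMarginal h₀ h₁, hxy]

lemma mul_abs_sub_le (h₀ : IsGoodMarginal μ₀ u₀ a₀ b₀ lam Lam)
    (h₁ : IsGoodMarginal μ₁ u₁ a₁ b₁ lam Lam) (hT : IsMongeMap μ₀ μ₁ T) (hlam : 0 < lam)
    (hLam : 0 ≤ Lam) {x x' : ℝ} (hx : x ∈ Ioo a₀ b₀) (hx' : x' ∈ Ioo a₀ b₀) :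
    lam * |T x - T x'| ≤ Lam * |x - x'| :=
  calc lam * |T x - T x'| ≤ |cdf μ₁ (T x) - cdf μ₁ (T x')| :=
        h₁.mul_abs_sub_le_abs_cdf_sub (Ioo_subset_Icc_self (hT.mapsTo_Ioo h₀ h₁ hlam hx'))
          (Ioo_subset_Icc_self (hT.mapsTo_Ioo h₀ h₁ hlam hx))
    _ = |cdf μ₀ x - cdf μ₀ x'| := by
        rw [hT.cdf_comp_of_isGoodMarginal h₀ h₁, hT.cdf_comp_of_isGoodMarginal h₀ h₁]
    _ ≤ Lam * |x - x'| := h₀.abs_cdf_sub_le hLam x' x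

end IsMongeMap

lemma ConvexOn.add_mul_sub_le_of_hasDerivWithinAt {S : Set ℝ} {f : ℝ → ℝ} {f' x z : ℝ}
    (hf : ConvexOn ℝ S f) (hx : x ∈ S) (hz : z ∈ S) (hf' : HasDerivWithinAt f f' S x) :
    f x + f' * (z - x) ≤ f z := by
  rcases lt_trichotomy x z with hxz | rfl | hzx
  · have := hf.le_slope_of_hasDerivWithinAt hx hz hxz hf'
    rw [slope_def_field, le_div_iff₀ (sub_pos.2 hxz)] at this
    linarith
  · simp
  · have := hf.slope_le_of_hasDerivWithinAt hz hx hzx hf'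
    rw [slope_def_field, div_le_iff₀ (sub_pos.2 hzx)] at this
    linarith

section conjOn

variable {f T : ℝ → ℝ} {a b : ℝ}

lemma le_conjOn (hf : ContinuousOn f (Icc a b)) {x : ℝ} (hx : x ∈ Icc a b) (y : ℝ) :
    x * y - f x ≤ conjOn f a b y :=
  le_csSup (isCompact_Icc.image_of_continuousOn
    ((continuousOn_id.mul continuousOn_const).sub hf)).bddAbove (mem_image_of_mem _ hx)

lemma conjOn_le (hab : a ≤ b) {y c : ℝ} (hc : ∀ x ∈ Icc a b, x * y - f x ≤ c) :
    conjOn f a b y ≤ c :=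
  csSup_le ((nonempty_Icc.2 hab).image _) (forall_mem_image.2 hc)

lemma conjOn_eq_of_hasDerivWithinAt (hf : ConvexOn ℝ (Icc a b) f)
    (hT : ∀ x ∈ Icc a b, HasDerivWithinAt f (T x) (Icc a b) x) {x : ℝ} (hx : x ∈ Icc a b) :
    conjOn f a b (T x) = x * T x - f x := by
  refine le_antisymm (conjOn_le (hx.1.trans hx.2) fun z hz => ?_)
    (le_conjOn (fun x hx => (hT x hx).continuousWithinAt) hx _)
  linarith [hf.add_mul_sub_le_of_hasDerivWithinAt hx hz (hT x hx)]

lemma add_conjOn_sub_le (hf : ConvexOn ℝ (Icc a b) f)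
    (hT : ∀ x ∈ Icc a b, HasDerivWithinAt f (T x) (Icc a b) x) {x x' : ℝ} (hx : x ∈ Icc a b)
    (hx' : x' ∈ Icc a b) : f x + conjOn f a b (T x') - x * T x' ≤ (T x - T x') * (x - x') := by
  rw [conjOn_eq_of_hasDerivWithinAt hf hT hx']
  linarith [hf.add_mul_sub_le_of_hasDerivWithinAt hx hx' (hT x hx)]

lemma continuous_conjOn (hf : ContinuousOn f (Icc a b)) (hab : a ≤ b) :
    Continuous (conjOn f a b) := by
  set M := max |a| |b|
  have hM : 0 ≤ M := (abs_nonneg a).trans (le_max_left _ _)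
  have key : ∀ y y', conjOn f a b y ≤ conjOn f a b y' + M * |y - y'| := fun y y' =>
    conjOn_le hab fun x hx => by
      have : x * (y - y') ≤ M * |y - y'| :=
        (le_abs_self _).trans (by rw [abs_mul]; gcongr; exact abs_le_max_abs_abs hx.1 hx.2)
      linarith [le_conjOn hf hx y']
  refine (LipschitzWith.of_dist_le_mul (K := M.toNNReal) fun y y' => ?_).continuous
  rw [Real.dist_eq, Real.dist_eq, Real.coe_toNNReal _ hM, abs_sub_le_iff]
  constructor
  · linarith [key y y']
  · have := key y' y
    rw [abs_sub_comm] at this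
    linarith

end conjOn

open ProbabilityTheory in
theorem conjOn_add_sub_mul_le {μ₀ μ₁ : Measure ℝ} {u₀ u₁ T₀ f₀ : ℝ → ℝ}
    {a₀ b₀ a₁ b₁ lam Lam : ℝ} (h₀ : IsGoodMarginal μ₀ u₀ a₀ b₀ lam Lam)
    (h₁ : IsGoodMarginal μ₁ u₁ a₁ b₁ lam Lam) (hT : IsMongeMap μ₀ μ₁ T₀) (hab₀ : a₀ ≤ b₀)
    (hlam : 0 < lam) (hLam : 0 ≤ Lam) (hf₀ : ConvexOn ℝ (Icc a₀ b₀) f₀)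
    (hT₀ : ∀ x ∈ Icc a₀ b₀, HasDerivWithinAt f₀ (T₀ x) (Icc a₀ b₀) x) {x y : ℝ}
    (hx : x ∈ Ioo a₀ b₀) (hy : y ∈ Ioo a₁ b₁) :
    lam ^ 3 * (f₀ x + conjOn f₀ a₀ b₀ y - x * y) ≤ Lam * (cdf μ₀ x - cdf μ₁ y) ^ 2 := by
  obtain ⟨x', hx', rfl⟩ := hT.surjOn_Ioo h₀ h₁ hab₀ hlam hLam hy
  have hgap := add_conjOn_sub_le hf₀ hT₀ (Ioo_subset_Icc_self hx) (Ioo_subset_Icc_self hx')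
  have hTlip := hT.mul_abs_sub_le h₀ h₁ hlam hLam hx hx'
  have hcdf : lam * |x - x'| ≤ |cdf μ₀ x - cdf μ₁ (T₀ x')| := by
    rw [hT.cdf_comp_of_isGoodMarginal h₀ h₁]
    exact h₀.mul_abs_sub_le_abs_cdf_sub (Ioo_subset_Icc_self hx') (Ioo_subset_Icc_self hx)
  have hprod : (T₀ x - T₀ x') * (x - x') = |T₀ x - T₀ x'| * |x - x'| := by
    rw [← abs_mul, abs_of_nonneg]
    rcases le_total x' x with h | h
    · exact mul_nonneg (sub_nonneg.2 (hT.1 h)) (sub_nonneg.2 h)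
    · exact mul_nonneg_of_nonpos_of_nonpos (sub_nonpos.2 (hT.1 h)) (sub_nonpos.2 h)
  calc lam ^ 3 * (f₀ x + conjOn f₀ a₀ b₀ (T₀ x') - x * T₀ x')
      ≤ lam ^ 2 * (lam * |T₀ x - T₀ x'|) * |x - x'| := by
        rw [hprod] at hgap
        nlinarith [pow_pos hlam 3]
    _ ≤ lam ^ 2 * (Lam * |x - x'|) * |x - x'| := by gcongr
    _ = Lam * (lam * |x - x'|) ^ 2 := by ring
    _ ≤ Lam * |cdf μ₀ x - cdf μ₁ (T₀ x')| ^ 2 := by gcongr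
    _ = Lam * (cdf μ₀ x - cdf μ₁ (T₀ x')) ^ 2 := by rw [sq_abs]

structure IsCouplingDensity {α β : Type*} [MeasurableSpace α] [MeasurableSpace β]
    (μ : Measure α) (ν : Measure β) (ρ : α × β → ℝ) : Prop where
  marginal_fst : ∀ᵐ x ∂μ, ∫ y, ρ (x, y) ∂ν = 1
  marginal_snd : ∀ᵐ y ∂ν, ∫ x, ρ (x, y) ∂μ = 1

namespace IsCouplingDensity

variable {α β : Type*} [MeasurableSpace α] [MeasurableSpace β] {μ : Measure α} {ν : Measure β}
  [SFinite μ] [SFinite ν] {ρ : α × β → ℝ}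

lemma integral_add_mul (hρ : IsCouplingDensity μ ν ρ) {φ : α → ℝ} {ψ : β → ℝ}
    (hφ : Integrable (fun z => φ z.1 * ρ z) (μ.prod ν))
    (hψ : Integrable (fun z => ψ z.2 * ρ z) (μ.prod ν)) :
    ∫ z, (φ z.1 + ψ z.2) * ρ z ∂(μ.prod ν) = ∫ x, φ x ∂μ + ∫ y, ψ y ∂ν := by
  simp_rw [add_mul]
  rw [integral_add hφ hψ, integral_prod _ hφ, integral_prod_symm _ hψ]
  congr 1
  · refine integral_congr_ae (hρ.marginal_fst.mono fun x hx => ?_)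
    simp only [integral_const_mul, hx, mul_one]
  · refine integral_congr_ae (hρ.marginal_snd.mono fun y hy => ?_)
    simp only [integral_const_mul, hy, mul_one]

lemma integral_eq_one [IsProbabilityMeasure μ] (hρ : IsCouplingDensity μ ν ρ)
    (hint : Integrable ρ (μ.prod ν)) : ∫ z, ρ z ∂(μ.prod ν) = 1 := by
  simpa using hρ.integral_add_mul (φ := fun _ => 1) (ψ := fun _ => 0) (by simpa using hint)
    (by simp)

end IsCouplingDensity

section blockDensity

open ProbabilityTheory

/-- Cut both marginals into `K` quantile blocks of mass `1 / K` and couple the `j`-th block of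
`μ₀` independently with the `j`-th block of `μ₁`. -/
def blockDensity (μ₀ μ₁ : Measure ℝ) (K : ℕ) (z : ℝ × ℝ) : ℝ :=
  if ⌈K * cdf μ₀ z.1⌉ = ⌈K * cdf μ₁ z.2⌉ then K else 0

variable {μ μ₀ μ₁ : Measure ℝ} {u u₀ u₁ : ℝ → ℝ} {a b a₀ b₀ a₁ b₁ lam Lam : ℝ} {K : ℕ}

lemma measurable_blockDensity : Measurable (blockDensity μ₀ μ₁ K) :=
  Measurable.ite (measurableSet_eq_fun
      ((((cdf μ₀).mono.measurable.comp measurable_fst).const_mul _).ceil)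
      ((((cdf μ₁).mono.measurable.comp measurable_snd).const_mul _).ceil))
    measurable_const measurable_const

lemma blockDensity_mem_Icc (z : ℝ × ℝ) : blockDensity μ₀ μ₁ K z ∈ Icc 0 (K : ℝ) := by
  unfold blockDensity
  split_ifs <;> simp

lemma abs_cdf_sub_le_of_blockDensity_ne_zero (hK : 0 < K) {z : ℝ × ℝ}
    (hz : blockDensity μ₀ μ₁ K z ≠ 0) : |cdf μ₀ z.1 - cdf μ₁ z.2| ≤ 1 / K := by
  have hKR : (0 : ℝ) < K := by exact_mod_cast hK
  have hceil : ⌈K * cdf μ₀ z.1⌉ = ⌈K * cdf μ₁ z.2⌉ := by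
    by_contra hne
    exact hz (if_neg hne)
  have h₀ := Int.ceil_eq_iff.1 hceil
  have h₁ := Int.ceil_eq_iff.1 (rfl : ⌈K * cdf μ₁ z.2⌉ = _)
  rw [le_div_iff₀ hKR, ← abs_of_pos hKR, ← abs_mul, abs_le]
  constructor <;> nlinarith

lemma IsGoodMarginal.ceil_mul_cdf_mem_Icc (h : IsGoodMarginal μ u a b lam Lam) (hlam : 0 < lam)
    (hK : 0 < K) {x : ℝ} (hx : x ∈ Ioo a b) : ⌈K * cdf μ x⌉ ∈ Icc 1 (K : ℤ) := by
  have hF := (h.cdf_mem_Ioo_iff hlam).2 hx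
  refine ⟨Int.one_le_ceil_iff.2 (mul_pos (by exact_mod_cast hK) hF.1), Int.ceil_le.2 ?_⟩
  push_cast
  nlinarith [hF.2]

lemma IsGoodMarginal.integral_ite_ceil_cdf_eq (h : IsGoodMarginal μ u a b lam Lam) (hab : a ≤ b)
    (hlam : 0 < lam) (hLam : 0 ≤ Lam) (hK : 0 < K) {j : ℤ} (hj : j ∈ Icc 1 (K : ℤ)) :
    ∫ y, (if ⌈K * cdf μ y⌉ = j then (K : ℝ) else 0) ∂μ = 1 := by
  have hmeas : MeasurableSet {y | ⌈K * cdf μ y⌉ = j} :=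
    ((cdf μ).mono.measurable.const_mul _).ceil (measurableSet_singleton j)
  have hind : (fun y => if ⌈K * cdf μ y⌉ = j then (K : ℝ) else 0) =
      {y | ⌈K * cdf μ y⌉ = j}.indicator fun _ => (K : ℝ) := by
    ext y
    simp [indicator_apply]
  rw [hind, integral_indicator_const _ hmeas, measureReal_def,
    h.measure_ceil_cdf_eq hab hlam hLam hK hj, ENNReal.toReal_ofReal (by positivity), smul_eq_mul]
  field_simp

lemma isCouplingDensity_blockDensity (h₀ : IsGoodMarginal μ₀ u₀ a₀ b₀ lam Lam)
    (h₁ : IsGoodMarginal μ₁ u₁ a₁ b₁ lam Lam) (hab₀ : a₀ ≤ b₀) (hab₁ : a₁ ≤ b₁) (hlam : 0 < lam)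
    (hLam : 0 ≤ Lam) (hK : 0 < K) : IsCouplingDensity μ₀ μ₁ (blockDensity μ₀ μ₁ K) where
  marginal_fst := h₀.ae_mem_Ioo.mono fun x hx => by
    simp only [blockDensity, eq_comm (a := ⌈K * cdf μ₀ x⌉)]
    exact h₁.integral_ite_ceil_cdf_eq hab₁ hlam hLam hK (h₀.ceil_mul_cdf_mem_Icc hlam hK hx)
  marginal_snd := h₁.ae_mem_Ioo.mono fun y hy =>
    h₀.integral_ite_ceil_cdf_eq hab₀ hlam hLam hK (h₁.ceil_mul_cdf_mem_Icc hlam hK hy)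

end blockDensity

lemma ae_prod_of_ae_of_ae {α β : Type*} [MeasurableSpace α] [MeasurableSpace β] {μ : Measure α}
    {ν : Measure β} {p : α → Prop} {q : β → Prop} (hp : ∀ᵐ x ∂μ, p x)
    (hq : ∀ᵐ y ∂ν, q y) : ∀ᵐ z ∂(μ.prod ν), p z.1 ∧ q z.2 :=
  (Measure.quasiMeasurePreserving_fst.ae hp).and (Measure.quasiMeasurePreserving_snd.ae hq)

lemma ContinuousOn.integrable_of_ae_mem {X E : Type*} [TopologicalSpace X] [MeasurableSpace X]
    [OpensMeasurableSpace X] [T2Space X] [NormedAddCommGroup E] {μ : Measure X}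
    [IsFiniteMeasureOnCompacts μ] {s : Set X} {F : X → E} (hF : ContinuousOn F s)
    (hs : IsCompact s) (hae : ∀ᵐ x ∂μ, x ∈ s) : Integrable F μ := by
  rw [← Measure.restrict_eq_self_of_ae_mem hae]
  exact hF.integrableOn_compact hs

/-- `excess f g / ε` is the density, with respect to `μ₀ ⊗ μ₁`, of the optimal plan of the
quadratically regularized transport problem with potentials `(f, g)`. -/
def excess (f g : ℝ → ℝ) (z : ℝ × ℝ) : ℝ := max (z.1 * z.2 - f z.1 - g z.2) 0

section excess

variable {μ₀ μ₁ : Measure ℝ} {a₀ b₀ a₁ b₁ ε : ℝ} {f g f₀ g₀ : ℝ → ℝ}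

lemma IsPotentialPair.isCouplingDensity (hfg : IsPotentialPair μ₀ μ₁ a₀ b₀ a₁ b₁ ε f g)
    (hε : 0 < ε) (hμ₀ : ∀ᵐ x ∂μ₀, x ∈ Icc a₀ b₀) (hμ₁ : ∀ᵐ y ∂μ₁, y ∈ Icc a₁ b₁) :
    IsCouplingDensity μ₀ μ₁ fun z => excess f g z / ε where
  marginal_fst := hμ₀.mono fun x hx => by
    have := hfg.2.2.1 x hx
    rw [Measure.restrict_eq_self_of_ae_mem hμ₁] at this
    simp only [excess, integral_div, this, div_self hε.ne']
  marginal_snd := hμ₁.mono fun y hy => by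
    have := hfg.2.2.2 y hy
    rw [Measure.restrict_eq_self_of_ae_mem hμ₀] at this
    simp only [excess, integral_div, this, div_self hε.ne']

lemma continuousOn_excess (hf : ContinuousOn f (Icc a₀ b₀)) (hg : ContinuousOn g (Icc a₁ b₁)) :
    ContinuousOn (excess f g) (Icc a₀ b₀ ×ˢ Icc a₁ b₁) :=
  (((continuousOn_fst.mul continuousOn_snd).sub (hf.comp continuousOn_fst mapsTo_fst_prod)).sub
    (hg.comp continuousOn_snd mapsTo_snd_prod)).sup continuousOn_const

lemma excess_sq_le_mul {z : ℝ × ℝ} (hz : z.1 * z.2 ≤ f₀ z.1 + g₀ z.2) :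
    excess f g z ^ 2 ≤ (f₀ z.1 - f z.1 + (g₀ z.2 - g z.2)) * excess f g z := by
  unfold excess
  rcases le_total (z.1 * z.2 - f z.1 - g z.2) 0 with h | h
  · simp [max_eq_right h]
  · rw [max_eq_left h, sq]
    exact mul_le_mul_of_nonneg_right (by linarith) h

lemma mul_le_excess_sq_add {z : ℝ × ℝ} {K δ ρ : ℝ} (hε : 0 < ε) (hρ : ρ ∈ Icc 0 K)
    (hz : ρ ≠ 0 → f₀ z.1 + g₀ z.2 ≤ z.1 * z.2 + δ) :
    (f₀ z.1 - f z.1 + (g₀ z.2 - g z.2)) * ρ ≤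
      excess f g z ^ 2 / (2 * ε) + (ε * K / 2 + δ) * ρ := by
  rcases eq_or_ne ρ 0 with rfl | hρ0
  · simp only [mul_zero, add_zero]
    positivity
  have hE : z.1 * z.2 - f z.1 - g z.2 ≤ excess f g z := le_max_left _ _
  have young : excess f g z * ρ ≤ excess f g z ^ 2 / (2 * ε) + ε * ρ ^ 2 / 2 := by
    rw [div_add_div _ _ (by positivity) two_ne_zero, le_div_iff₀ (by positivity)]
    nlinarith [sq_nonneg (excess f g z - ε * ρ)]
  calc (f₀ z.1 - f z.1 + (g₀ z.2 - g z.2)) * ρ ≤ (excess f g z + δ) * ρ :=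
        mul_le_mul_of_nonneg_right (by linarith [hz hρ0]) hρ.1
    _ ≤ excess f g z ^ 2 / (2 * ε) + ε * ρ ^ 2 / 2 + δ * ρ := by linarith
    _ ≤ excess f g z ^ 2 / (2 * ε) + (ε * K / 2 + δ) * ρ := by
        nlinarith [mul_le_mul_of_nonneg_left (mul_le_mul_of_nonneg_right hρ.2 hρ.1) hε.le]

theorem integral_excess_sq_le [IsFiniteMeasure μ₀] [IsFiniteMeasure μ₁]
    (hμ₀ : ∀ᵐ x ∂μ₀, x ∈ Icc a₀ b₀) (hμ₁ : ∀ᵐ y ∂μ₁, y ∈ Icc a₁ b₁)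
    (hf : ContinuousOn f (Icc a₀ b₀)) (hg : ContinuousOn g (Icc a₁ b₁))
    (hf₀ : ContinuousOn f₀ (Icc a₀ b₀)) (hg₀ : ContinuousOn g₀ (Icc a₁ b₁)) (hε : 0 < ε)
    (hρ : IsCouplingDensity μ₀ μ₁ fun z => excess f g z / ε)
    (hdom : ∀ x ∈ Icc a₀ b₀, ∀ y ∈ Icc a₁ b₁, x * y ≤ f₀ x + g₀ y) :
    ∫ z, excess f g z ^ 2 ∂(μ₀.prod μ₁) ≤
      ε * (∫ x, (f₀ x - f x) ∂μ₀ + ∫ y, (g₀ y - g y) ∂μ₁) := by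
  have hR := ae_prod_of_ae_of_ae hμ₀ hμ₁
  have hint : ∀ {F : ℝ × ℝ → ℝ}, ContinuousOn F (Icc a₀ b₀ ×ˢ Icc a₁ b₁) →
      Integrable F (μ₀.prod μ₁) := fun hF =>
    hF.integrable_of_ae_mem (isCompact_Icc.prod isCompact_Icc) hR
  have hE := continuousOn_excess hf hg
  have hφ : ContinuousOn (fun z : ℝ × ℝ => f₀ z.1 - f z.1) (Icc a₀ b₀ ×ˢ Icc a₁ b₁) :=
    (hf₀.sub hf).comp continuousOn_fst mapsTo_fst_prod
  have hψ : ContinuousOn (fun z : ℝ × ℝ => g₀ z.2 - g z.2) (Icc a₀ b₀ ×ˢ Icc a₁ b₁) :=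
    (hg₀.sub hg).comp continuousOn_snd mapsTo_snd_prod
  rw [← hρ.integral_add_mul (hint (hφ.mul (hE.div_const ε))) (hint (hψ.mul (hE.div_const ε))),
    ← integral_const_mul]
  refine integral_mono_ae (hint (hE.pow 2)) ((hint ((hφ.add hψ).mul (hE.div_const ε))).const_mul ε)
    (hR.mono fun z hz => (excess_sq_le_mul (hdom _ hz.1 _ hz.2)).trans_eq ?_)
  field_simp

theorem integral_sub_add_integral_sub_le [IsProbabilityMeasure μ₀] [IsFiniteMeasure μ₁]
    (hμ₀ : ∀ᵐ x ∂μ₀, x ∈ Icc a₀ b₀) (hμ₁ : ∀ᵐ y ∂μ₁, y ∈ Icc a₁ b₁)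
    (hf : ContinuousOn f (Icc a₀ b₀)) (hg : ContinuousOn g (Icc a₁ b₁))
    (hf₀ : ContinuousOn f₀ (Icc a₀ b₀)) (hg₀ : ContinuousOn g₀ (Icc a₁ b₁)) (hε : 0 < ε)
    {ρ : ℝ × ℝ → ℝ} (hρ : IsCouplingDensity μ₀ μ₁ ρ) (hρm : Measurable ρ) {K : ℝ}
    (hρK : ∀ z, ρ z ∈ Icc 0 K) {δ : ℝ}
    (hsupp : ∀ᵐ z ∂(μ₀.prod μ₁), ρ z ≠ 0 → f₀ z.1 + g₀ z.2 ≤ z.1 * z.2 + δ) :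
    ∫ x, (f₀ x - f x) ∂μ₀ + ∫ y, (g₀ y - g y) ∂μ₁ ≤
      (∫ z, excess f g z ^ 2 ∂(μ₀.prod μ₁)) / (2 * ε) + (ε * K / 2 + δ) := by
  have hint : ∀ {F : ℝ × ℝ → ℝ}, ContinuousOn F (Icc a₀ b₀ ×ˢ Icc a₁ b₁) →
      Integrable F (μ₀.prod μ₁) := fun hF =>
    hF.integrable_of_ae_mem (isCompact_Icc.prod isCompact_Icc) (ae_prod_of_ae_of_ae hμ₀ hμ₁)
  have hmulρ : ∀ {F : ℝ × ℝ → ℝ}, Integrable F (μ₀.prod μ₁) →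
      Integrable (fun z => F z * ρ z) (μ₀.prod μ₁) := fun hF =>
    hF.mul_bdd hρm.aestronglyMeasurable (ae_of_all _ fun z => by
      rw [Real.norm_eq_abs, abs_of_nonneg (hρK z).1]; exact (hρK z).2)
  have hρint : Integrable ρ (μ₀.prod μ₁) := by simpa using hmulρ (integrable_const (1 : ℝ))
  have hE2 : Integrable (fun z => excess f g z ^ 2 / (2 * ε)) (μ₀.prod μ₁) :=
    (hint ((continuousOn_excess hf hg).pow 2)).div_const (2 * ε)
  have hφ : ContinuousOn (fun z : ℝ × ℝ => f₀ z.1 - f z.1) (Icc a₀ b₀ ×ˢ Icc a₁ b₁) :=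
    (hf₀.sub hf).comp continuousOn_fst mapsTo_fst_prod
  have hψ : ContinuousOn (fun z : ℝ × ℝ => g₀ z.2 - g z.2) (Icc a₀ b₀ ×ˢ Icc a₁ b₁) :=
    (hg₀.sub hg).comp continuousOn_snd mapsTo_snd_prod
  rw [← hρ.integral_add_mul (hmulρ (hint hφ)) (hmulρ (hint hψ))]
  calc ∫ z, (f₀ z.1 - f z.1 + (g₀ z.2 - g z.2)) * ρ z ∂(μ₀.prod μ₁)
      ≤ ∫ z, (excess f g z ^ 2 / (2 * ε) + (ε * K / 2 + δ) * ρ z) ∂(μ₀.prod μ₁) :=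
        integral_mono_ae (hmulρ (hint (hφ.add hψ))) (hE2.add (hρint.const_mul _))
          (hsupp.mono fun z hz => mul_le_excess_sq_add hε (hρK z) hz)
    _ = _ := by
        rw [integral_add hE2 (hρint.const_mul _), integral_div, integral_const_mul,
          hρ.integral_eq_one hρint, mul_one]

end excess

lemma exists_nat_mul_add_div_sq_le {ε C : ℝ} (hε : 0 < ε) (hε1 : ε ≤ 1) (hC : 0 ≤ C) :
    ∃ K : ℕ, 0 < K ∧ ε * K / 2 + C / K ^ 2 ≤ (C + 1) * ε ^ ((2 : ℝ) / 3) := by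
  set t := ε ^ ((1 : ℝ) / 3)
  have ht0 : 0 < t := by positivity
  have ht1 : t ≤ 1 := Real.rpow_le_one hε.le hε1 (by norm_num)
  have ht3 : ε = t ^ 3 := by rw [← Real.rpow_natCast, ← Real.rpow_mul hε.le]; norm_num
  have ht2 : ε ^ ((2 : ℝ) / 3) = t ^ 2 := by
    rw [← Real.rpow_natCast, ← Real.rpow_mul hε.le]; norm_num
  refine ⟨⌈t⁻¹⌉₊, Nat.ceil_pos.2 (by positivity), ?_⟩
  have hK1 : t⁻¹ ≤ ⌈t⁻¹⌉₊ := Nat.le_ceil _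
  have hK2 : (⌈t⁻¹⌉₊ : ℝ) < t⁻¹ + 1 := Nat.ceil_lt_add_one (by positivity)
  set K : ℝ := (⌈t⁻¹⌉₊ : ℝ)
  have hK0 : 0 < K := (inv_pos.2 ht0).trans_le hK1
  have h1 : ε * K ≤ 2 * t ^ 2 := by
    have : t ^ 3 * (t⁻¹ + 1) = t ^ 2 + t ^ 2 * t := by field_simp
    rw [ht3]
    nlinarith [mul_le_mul_of_nonneg_left hK2.le (by positivity : (0 : ℝ) ≤ t ^ 3),
      mul_le_mul_of_nonneg_left ht1 (by positivity : (0 : ℝ) ≤ t ^ 2)]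
  have h2 : C / K ^ 2 ≤ C * t ^ 2 := by
    have : K⁻¹ ≤ t := (inv_le_comm₀ hK0 ht0).2 hK1
    rw [div_eq_mul_inv, ← inv_pow]
    gcongr
  rw [ht2]
  linarith

open ProbabilityTheory in
lemma add_conjOn_le_of_blockDensity_ne_zero {μ₀ μ₁ : Measure ℝ} {u₀ u₁ T₀ f₀ : ℝ → ℝ}
    {a₀ b₀ a₁ b₁ lam Lam : ℝ} (h₀ : IsGoodMarginal μ₀ u₀ a₀ b₀ lam Lam)
    (h₁ : IsGoodMarginal μ₁ u₁ a₁ b₁ lam Lam) (hT : IsMongeMap μ₀ μ₁ T₀) (hab₀ : a₀ ≤ b₀)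
    (hlam : 0 < lam) (hLam : 0 ≤ Lam) (hf₀ : ConvexOn ℝ (Icc a₀ b₀) f₀)
    (hT₀ : ∀ x ∈ Icc a₀ b₀, HasDerivWithinAt f₀ (T₀ x) (Icc a₀ b₀) x) {K : ℕ} (hK : 0 < K) :
    ∀ᵐ z ∂(μ₀.prod μ₁), blockDensity μ₀ μ₁ K z ≠ 0 →
      f₀ z.1 + conjOn f₀ a₀ b₀ z.2 ≤ z.1 * z.2 + Lam / lam ^ 3 / K ^ 2 := by
  filter_upwards [ae_prod_of_ae_of_ae h₀.ae_mem_Ioo h₁.ae_mem_Ioo] with z hz hρ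
  have hgap := conjOn_add_sub_mul_le h₀ h₁ hT hab₀ hlam hLam hf₀ hT₀ hz.1 hz.2
  have hcdf : (cdf μ₀ z.1 - cdf μ₁ z.2) ^ 2 ≤ (1 / K) ^ 2 := by
    rw [← sq_abs]
    exact pow_le_pow_left₀ (abs_nonneg _) (abs_cdf_sub_le_of_blockDensity_ne_zero hK hρ) 2
  have hK' : (0 : ℝ) < K := by exact_mod_cast hK
  rw [← sub_le_iff_le_add', div_div, le_div_iff₀ (by positivity)]
  calc (f₀ z.1 + conjOn f₀ a₀ b₀ z.2 - z.1 * z.2) * (lam ^ 3 * K ^ 2)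
      = lam ^ 3 * (f₀ z.1 + conjOn f₀ a₀ b₀ z.2 - z.1 * z.2) * K ^ 2 := by ring
    _ ≤ Lam * (1 / K) ^ 2 * K ^ 2 :=
        mul_le_mul_of_nonneg_right (hgap.trans (by gcongr)) (by positivity)
    _ = Lam := by field_simp

theorem abs_integral_sub_le_of_isCouplingDensity {μ₀ μ₁ : Measure ℝ} [IsProbabilityMeasure μ₀]
    [IsFiniteMeasure μ₁] {a₀ b₀ a₁ b₁ ε K δ : ℝ} {f g f₀ g₀ : ℝ → ℝ}
    (hμ₀ : ∀ᵐ x ∂μ₀, x ∈ Icc a₀ b₀) (hμ₁ : ∀ᵐ y ∂μ₁, y ∈ Icc a₁ b₁)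
    (hf : ContinuousOn f (Icc a₀ b₀)) (hg : ContinuousOn g (Icc a₁ b₁))
    (hf₀ : ContinuousOn f₀ (Icc a₀ b₀)) (hg₀ : ContinuousOn g₀ (Icc a₁ b₁)) (hε : 0 < ε)
    (hfg : IsCouplingDensity μ₀ μ₁ fun z => excess f g z / ε)
    (hdom : ∀ x ∈ Icc a₀ b₀, ∀ y ∈ Icc a₁ b₁, x * y ≤ f₀ x + g₀ y)
    {ρ : ℝ × ℝ → ℝ} (hρ : IsCouplingDensity μ₀ μ₁ ρ) (hρm : Measurable ρ)
    (hρK : ∀ z, ρ z ∈ Icc 0 K)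
    (hsupp : ∀ᵐ z ∂(μ₀.prod μ₁), ρ z ≠ 0 → f₀ z.1 + g₀ z.2 ≤ z.1 * z.2 + δ)
    (hnorm : ∫ x, f x ∂μ₀ = ∫ y, g y ∂μ₁) (hnorm₀ : ∫ x, f₀ x ∂μ₀ = ∫ y, g₀ y ∂μ₁) :
    |∫ x, (f x - f₀ x) ∂μ₀| ≤ ε * K / 2 + δ := by
  have hU := integral_excess_sq_le hμ₀ hμ₁ hf hg hf₀ hg₀ hε hfg hdom
  have hL := integral_sub_add_integral_sub_le hμ₀ hμ₁ hf hg hf₀ hg₀ hε hρ hρm hρK hsupp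
  have hint₀ := fun {φ : ℝ → ℝ} (hφ : ContinuousOn φ (Icc a₀ b₀)) =>
    hφ.integrable_of_ae_mem isCompact_Icc hμ₀
  have hint₁ := fun {ψ : ℝ → ℝ} (hψ : ContinuousOn ψ (Icc a₁ b₁)) =>
    hψ.integrable_of_ae_mem isCompact_Icc hμ₁
  rw [integral_sub (hint₀ hf) (hint₀ hf₀)]
  rw [integral_sub (hint₀ hf₀) (hint₀ hf), integral_sub (hint₁ hg₀) (hint₁ hg), ← hnorm,
    ← hnorm₀] at hU hL
  set A := ∫ x, f₀ x ∂μ₀ - ∫ x, f x ∂μ₀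
  set Q := ∫ z, excess f g z ^ 2 ∂(μ₀.prod μ₁)
  have hQA : Q ≤ A * (2 * ε) := hU.trans_eq (by ring)
  have hQ0 : 0 ≤ Q := integral_nonneg fun z => sq_nonneg _
  have hA : 0 ≤ A := nonneg_of_mul_nonneg_left (hQ0.trans hQA) (by positivity)
  have hQ : Q / (2 * ε) ≤ A := (div_le_iff₀ (by positivity)).2 hQA
  rw [abs_of_nonpos (by linarith)]
  linarith

theorem stmt19
    (a₀ b₀ a₁ b₁ lam Lam : ℝ) (μ₀ μ₁ : Measure ℝ) (u₀ u₁ : ℝ → ℝ)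
    (hab₀ : a₀ < b₀) (hab₁ : a₁ < b₁) (hlam : 0 < lam)
    (hμ₀ : IsGoodMarginal μ₀ u₀ a₀ b₀ lam Lam)
    (hμ₁ : IsGoodMarginal μ₁ u₁ a₁ b₁ lam Lam) :
    ∃ C > 0, ∃ ε₀ > 0, ∀ ε : ℝ, 0 < ε → ε < ε₀ →
      ∀ f g T₀ f₀ : ℝ → ℝ,
        IsPotentialPair μ₀ μ₁ a₀ b₀ a₁ b₁ ε f g →
        IsMongeMap μ₀ μ₁ T₀ →
        ConvexOn ℝ (Icc a₀ b₀) f₀ →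
        (∀ x ∈ Icc a₀ b₀, HasDerivWithinAt f₀ (T₀ x) (Icc a₀ b₀) x) →
        (∫ x in Icc a₀ b₀, f x ∂μ₀) = (∫ y in Icc a₁ b₁, g y ∂μ₁) →
        (∫ x in Icc a₀ b₀, f₀ x ∂μ₀) = (∫ y in Icc a₁ b₁, conjOn f₀ a₀ b₀ y ∂μ₁) →
        |∫ x in Icc a₀ b₀, (f x - f₀ x) ∂μ₀| ≤ C * ε ^ ((2 : ℝ) / 3) := by
  have hu := hμ₀.2.2.2 a₀ (left_mem_Icc.2 hab₀.le)
  have hLam : 0 < Lam := hlam.trans_le (hu.1.trans hu.2)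
  refine ⟨Lam / lam ^ 3 + 1, by positivity, 1, one_pos, fun ε hε hε1 f g T₀ f₀ hfg hT hf₀ hT₀
    hnorm hnorm₀ => ?_⟩
  have := hμ₀.1
  have := hμ₁.1
  obtain ⟨K, hK, hKε⟩ := exists_nat_mul_add_div_sq_le hε hε1.le (by positivity : 0 ≤ Lam / lam ^ 3)
  have hf₀c : ContinuousOn f₀ (Icc a₀ b₀) := fun x hx => (hT₀ x hx).continuousWithinAt
  rw [hμ₀.restrict_Icc, hμ₁.restrict_Icc] at hnorm hnorm₀
  rw [hμ₀.restrict_Icc]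
  refine le_trans ?_ hKε
  exact abs_integral_sub_le_of_isCouplingDensity hμ₀.ae_mem_Icc hμ₁.ae_mem_Icc
    hfg.1.choose_spec.continuousOn hfg.2.1.choose_spec.continuousOn hf₀c
    (continuous_conjOn hf₀c hab₀.le).continuousOn hε
    (hfg.isCouplingDensity hε hμ₀.ae_mem_Icc hμ₁.ae_mem_Icc)
    (fun x hx y _ => by linarith [le_conjOn hf₀c hx y])
    (isCouplingDensity_blockDensity hμ₀ hμ₁ hab₀.le hab₁.le hlam hLam.le hK)
    measurable_blockDensity blockDensity_mem_Icc
    (add_conjOn_le_of_blockDensity_ne_zero hμ₀ hμ₁ hT hab₀.le hlam hLam.le hf₀ hT₀ hK)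
    hnorm hnorm₀
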